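/- Fix x₀ ∈ ℝ^N and suppose the norm A is decomposable at L* x₀ with data (T₀, e₀); set S₀ := T₀⊥. Let C_Φ > 0 satisfy ‖Φ x‖₂ ≥ C_Φ ‖x‖₂ for all x ∈ ker(L_{S₀}*), let C_L > 0 satisfy ‖L_{S₀}* x‖₂ ≥ C_L ‖x‖₂ for all x ∈ (ker L_{S₀}*)⊥, and let C_A > 0 satisfy A(z) ≥ C_A ‖z‖₂ for all z ∈ ℝ^P. Let ε > 0, c > 0, and w ∈ ℝ^M with ‖w‖₂ ≤ ε; set y := Φ x₀ + w and λ := c ε. Suppose the source condition SC(x₀) holds with (η, α) and A*(P_{S₀} α) < 1. Then every minimizer x⋆ of problem (P) satisfies ‖x⋆ − x₀‖₂ ≤ [ (2 + c‖η‖₂)/C_Φ + ((‖Φ‖ + C_Φ)/(C_L C_Φ C_A)) · (1 + c‖η‖₂/2)² / (c (1 − A*(P_{S₀} α))) ] ε, where ‖Φ‖ is the operator norm of Φ with respect to the Euclidean norms. -/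

import Mathlib

open RealInnerProductSpace

noncomputable section

abbrev Euc (n : ℕ) := EuclideanSpace ℝ (Fin n)

def proj {n : ℕ} (V : Submodule ℝ (Euc n)) : Euc n →L[ℝ] Euc n :=
  V.subtypeL.comp (V.orthogonalProjectionOnto)

def dualNorm {n : ℕ} (A : Euc n → ℝ) (α : Euc n) : ℝ :=
  sSup {r : ℝ | ∃ v : Euc n, A v ≤ 1 ∧ r = ⟪α, v⟫}

def subdiff {n : ℕ} (f : Euc n → ℝ) (x : Euc n) : Set (Euc n) :=
  {g : Euc n | ∀ y : Euc n, f x + ⟪g, y - x⟫ ≤ f y}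

def IsNorm {n : ℕ} (A : Euc n → ℝ) : Prop :=
  (∀ x, A x = 0 ↔ x = 0) ∧ (∀ (c : ℝ) (x : Euc n), A (c • x) = |c| * A x) ∧
    (∀ x y, A (x + y) ≤ A x + A y)

def Decomposable {n : ℕ} (A : Euc n → ℝ) (u : Euc n) (T : Submodule ℝ (Euc n)) (e : Euc n) :
    Prop :=
  e ∈ T ∧
  subdiff A u = {α : Euc n | proj T α = e ∧ dualNorm A (proj Tᗮ α) ≤ 1} ∧
  ∀ z : Euc n, z ∈ Tᗮ →
    A z = sSup {r : ℝ | ∃ v ∈ (Tᗮ : Submodule ℝ (Euc n)), dualNorm A v ≤ 1 ∧ r = ⟪v, z⟫}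

def obj {N M P : ℕ} (Φ : Euc N →L[ℝ] Euc M) (L : Euc P →L[ℝ] Euc N) (A : Euc P → ℝ)
    (y : Euc M) (lam : ℝ) (x : Euc N) : ℝ :=
  (1/2) * ‖y - Φ x‖^2 + lam * A (ContinuousLinearMap.adjoint L x)

def SC {N M P : ℕ} (Φ : Euc N →L[ℝ] Euc M) (L : Euc P →L[ℝ] Euc N) (A : Euc P → ℝ)
    (x : Euc N) (η : Euc M) (α : Euc P) : Prop :=
  α ∈ subdiff A (ContinuousLinearMap.adjoint L x) ∧
  ContinuousLinearMap.adjoint Φ η = L α ∧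
  L α ∈ subdiff (fun z => A (ContinuousLinearMap.adjoint L z)) x

def breg {n : ℕ} (A : Euc n → ℝ) (α u u₀ : Euc n) : ℝ :=
  A u - A u₀ - ⟪α, u - u₀⟫


/-!
Comparing the minimiser `x⋆` with the points `x⋆ - t (x⋆ - x₀)` and letting `t → 0⁺` gives the
first-order inequality `λ (R x⋆ - R x₀) ≤ ⟪y - Φ x⋆, Φ (x⋆ - x₀)⟫`. With the source condition
`Φ* η = L α` this becomes a quadratic inequality in `‖Φ (x⋆ - x₀)‖`, which bounds the prediction
error by a multiple of `ε` and `λ D` by a multiple of `ε²`, where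
`D = A (L* x⋆) - A (L* x₀) - ⟪α, L* (x⋆ - x₀)⟫` is the Bregman distance.
Decomposability lets one replace the `S₀`-component of `α` by any `v ∈ S₀` with `A* v ≤ 1` without
leaving `∂A (L* x₀)`; taking the supremum over such `v` gives
`(1 - A* (P_{S₀} α)) A (P_{S₀} L* (x⋆ - x₀)) ≤ D`. Finally, split `x⋆ - x₀` along `ker L_{S₀}*` and
its orthogonal complement: `C_L` controls the second component through the bound on `D`, and `C_Φ`
controls the first through the prediction error.
-/

open Filter Topology

lemma proj_eq_starProjection {n : ℕ} (V : Submodule ℝ (Euc n)) : proj V = V.starProjection :=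
  rfl

lemma proj_mem {n : ℕ} (V : Submodule ℝ (Euc n)) (x : Euc n) : proj V x ∈ V :=
  V.starProjection_apply_mem x

lemma inner_proj_right_of_mem {n : ℕ} {V : Submodule ℝ (Euc n)} {v : Euc n} (hv : v ∈ V)
    (d : Euc n) : ⟪v, proj V d⟫ = ⟪v, d⟫ := by
  rw [proj_eq_starProjection, ← Submodule.inner_starProjection_left_eq_right,
    V.starProjection_eq_self_iff.mpr hv]

lemma le_and_le_sq_div_four_of_le_mul_sub_sq {a b s : ℝ} (ha : 0 ≤ a) (hb : 0 ≤ b)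
    (h : a ≤ b * s - s ^ 2) : s ≤ b ∧ a ≤ b ^ 2 / 4 :=
  ⟨by nlinarith, by nlinarith [sq_nonneg (s - b / 2)]⟩

lemma mul_norm_le_of_bounded_below_on_ker {E F G : Type*} [NormedAddCommGroup E]
    [InnerProductSpace ℝ E] [FiniteDimensional ℝ E] [NormedAddCommGroup F] [NormedSpace ℝ F]
    [NormedAddCommGroup G] [NormedSpace ℝ G] (Φ : E →L[ℝ] F) (B : E →ₗ[ℝ] G) {CΦ CL : ℝ}
    (hCΦ : 0 ≤ CΦ) (hCL : 0 < CL) (hΦ : ∀ x ∈ LinearMap.ker B, CΦ * ‖x‖ ≤ ‖Φ x‖)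
    (hB : ∀ x ∈ (LinearMap.ker B)ᗮ, CL * ‖x‖ ≤ ‖B x‖) (h : E) :
    CΦ * ‖h‖ ≤ ‖Φ h‖ + (‖Φ‖ + CΦ) * (‖B h‖ / CL) := by
  set K := LinearMap.ker B
  set h₁ := K.starProjection h
  have hh₁ : h₁ ∈ K := K.starProjection_apply_mem h
  have hh₂ : h - h₁ ∈ Kᗮ := K.sub_starProjection_mem_orthogonal h
  have hBh₂ : B (h - h₁) = B h := by rw [map_sub, LinearMap.mem_ker.mp hh₁, sub_zero]
  have hnorm₂ : ‖h - h₁‖ ≤ ‖B h‖ / CL := by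
    rw [le_div_iff₀ hCL, ← hBh₂]
    linarith [hB _ hh₂]
  have hnorm₁ : CΦ * ‖h₁‖ ≤ ‖Φ h‖ + ‖Φ‖ * ‖h - h₁‖ :=
    calc CΦ * ‖h₁‖ ≤ ‖Φ h₁‖ := hΦ _ hh₁
      _ = ‖Φ h - Φ (h - h₁)‖ := by rw [map_sub, sub_sub_cancel]
      _ ≤ ‖Φ h‖ + ‖Φ (h - h₁)‖ := norm_sub_le _ _
      _ ≤ ‖Φ h‖ + ‖Φ‖ * ‖h - h₁‖ := by grw [Φ.le_opNorm (h - h₁)]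
  calc CΦ * ‖h‖ = CΦ * ‖h₁ + (h - h₁)‖ := by rw [add_sub_cancel]
    _ ≤ CΦ * (‖h₁‖ + ‖h - h₁‖) := by grw [norm_add_le]
    _ ≤ ‖Φ h‖ + (‖Φ‖ + CΦ) * ‖h - h₁‖ := by linarith
    _ ≤ ‖Φ h‖ + (‖Φ‖ + CΦ) * (‖B h‖ / CL) := by grw [hnorm₂]

section NormAndDualNorm

variable {n : ℕ} {A : Euc n → ℝ} {CA : ℝ}

lemma IsNorm.convexOn (hA : IsNorm A) : ConvexOn ℝ Set.univ A := by
  refine ⟨convex_univ, fun u _ v _ a b ha hb _ => ?_⟩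
  calc A (a • u + b • v) ≤ A (a • u) + A (b • v) := hA.2.2 _ _
    _ = a • A u + b • A v := by
      rw [hA.2.1, hA.2.1, abs_of_nonneg ha, abs_of_nonneg hb, smul_eq_mul, smul_eq_mul]

lemma dualNorm_zero (h0 : A 0 = 0) : dualNorm A 0 = 0 := by
  have hset : {r : ℝ | ∃ v : Euc n, A v ≤ 1 ∧ r = ⟪(0 : Euc n), v⟫} = {0} := by
    ext r
    simp only [inner_zero_left, Set.mem_ofPred_eq, Set.mem_singleton_iff]
    exact ⟨fun ⟨_, _, hr⟩ => hr, fun hr => ⟨0, h0.le.trans zero_le_one, hr⟩⟩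
  rw [dualNorm, hset, csSup_singleton]

lemma bddAbove_inner_of_coercive (hCA : 0 < CA) (hCAbd : ∀ z, CA * ‖z‖ ≤ A z) (u : Euc n) :
    BddAbove {r : ℝ | ∃ v : Euc n, A v ≤ 1 ∧ r = ⟪u, v⟫} := by
  refine ⟨‖u‖ / CA, ?_⟩
  rintro _ ⟨v, hv, rfl⟩
  have hv' : ‖v‖ ≤ 1 / CA := by
    rw [le_div_iff₀ hCA]
    linarith [hCAbd v]
  calc ⟪u, v⟫ ≤ ‖u‖ * ‖v‖ := real_inner_le_norm u v
    _ ≤ ‖u‖ * (1 / CA) := by gcongr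
    _ = ‖u‖ / CA := by ring

lemma inner_le_dualNorm_mul (hA : IsNorm A) (hCA : 0 < CA) (hCAbd : ∀ z, CA * ‖z‖ ≤ A z)
    (u z : Euc n) : ⟪u, z⟫ ≤ dualNorm A u * A z := by
  rcases eq_or_ne z 0 with rfl | hz
  · simp [(hA.1 0).mpr rfl]
  have hAz : 0 < A z := (mul_pos hCA (norm_pos_iff.mpr hz)).trans_le (hCAbd z)
  have hunit : A ((A z)⁻¹ • z) ≤ 1 := by
    rw [hA.2.1, abs_of_pos (inv_pos.mpr hAz), inv_mul_cancel₀ hAz.ne']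
  have hle : (A z)⁻¹ * ⟪u, z⟫ ≤ dualNorm A u := by
    rw [← real_inner_smul_right]
    exact le_csSup (bddAbove_inner_of_coercive hCA hCAbd u) ⟨_, hunit, rfl⟩
  rwa [inv_mul_le_iff₀ hAz, mul_comm] at hle

end NormAndDualNorm

section Bregman

variable {n : ℕ} {A : Euc n → ℝ} {α u₀ : Euc n}

lemma breg_nonneg (hα : α ∈ subdiff A u₀) (u : Euc n) : 0 ≤ breg A α u u₀ := by
  have := hα u
  unfold breg
  linarith

variable {T : Submodule ℝ (Euc n)} {e : Euc n}

lemma Decomposable.add_sub_proj_mem_subdiff (hdec : Decomposable A u₀ T e)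
    (hα : α ∈ subdiff A u₀) {v : Euc n} (hv : v ∈ Tᗮ) (hvd : dualNorm A v ≤ 1) :
    α + v - proj Tᗮ α ∈ subdiff A u₀ := by
  rw [hdec.2.1] at hα ⊢
  have hαS : Tᗮ.starProjection α ∈ Tᗮ := Tᗮ.starProjection_apply_mem α
  simp only [Set.mem_ofPred_eq, proj_eq_starProjection, map_add, map_sub] at hα ⊢
  rw [T.starProjection_apply_eq_zero_iff.mpr hv, T.starProjection_apply_eq_zero_iff.mpr hαS,
    Tᗮ.starProjection_eq_self_iff.mpr hv, Tᗮ.starProjection_eq_self_iff.mpr hαS]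
  exact ⟨by simpa using hα.1, by simpa using hvd⟩

lemma Decomposable.one_sub_dualNorm_mul_le_breg {CA : ℝ} (hA : IsNorm A) (hCA : 0 < CA)
    (hCAbd : ∀ z, CA * ‖z‖ ≤ A z) (hdec : Decomposable A u₀ T e) (hα : α ∈ subdiff A u₀)
    (u : Euc n) :
    (1 - dualNorm A (proj Tᗮ α)) * A (proj Tᗮ (u - u₀)) ≤ breg A α u u₀ := by
  have hαz : ⟪proj Tᗮ α, u - u₀⟫ ≤ dualNorm A (proj Tᗮ α) * A (proj Tᗮ (u - u₀)) := by
    rw [← inner_proj_right_of_mem (proj_mem Tᗮ α)]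
    exact inner_le_dualNorm_mul hA hCA hCAbd _ _
  have hsup : A (proj Tᗮ (u - u₀)) ≤
      breg A α u u₀ + dualNorm A (proj Tᗮ α) * A (proj Tᗮ (u - u₀)) := by
    refine (hdec.2.2 _ (proj_mem _ _)).trans_le (csSup_le ⟨0, 0, Tᗮ.zero_mem, ?_, by simp⟩ ?_)
    · rw [dualNorm_zero ((hA.1 0).mpr rfl)]
      exact zero_le_one
    rintro _ ⟨v, hv, hvd, rfl⟩
    have hβ := hdec.add_sub_proj_mem_subdiff hα hv hvd u
    rw [inner_proj_right_of_mem hv]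
    simp only [breg, inner_add_left, inner_sub_left] at hβ ⊢
    linarith
  linarith

end Bregman

section Minimizers

variable {N M P : ℕ} {Φ : Euc N →L[ℝ] Euc M} {L : Euc P →L[ℝ] Euc N} {A : Euc P → ℝ}

lemma mul_sub_le_inner_of_minimizer (hA : IsNorm A) {y : Euc M} {lam : ℝ} (hlam : 0 ≤ lam)
    {xs : Euc N} (hmin : ∀ x, obj Φ L A y lam xs ≤ obj Φ L A y lam x) (x : Euc N) :
    lam * (A (L.adjoint xs) - A (L.adjoint x)) ≤ ⟪y - Φ xs, Φ (xs - x)⟫ := by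
  have hstep : ∀ t ∈ Set.Ioo (0 : ℝ) 1, lam * (A (L.adjoint xs) - A (L.adjoint x)) ≤
      ⟪y - Φ xs, Φ (xs - x)⟫ + t * (‖Φ (xs - x)‖ ^ 2 / 2) := by
    rintro t ⟨ht0, ht1⟩
    have hconv : A (L.adjoint (xs - t • (xs - x))) ≤
        (1 - t) * A (L.adjoint xs) + t * A (L.adjoint x) := by
      have hcomb : L.adjoint (xs - t • (xs - x)) = (1 - t) • L.adjoint xs + t • L.adjoint x := by
        simp only [map_sub, map_smul]
        module
      rw [hcomb]
      exact hA.convexOn.2 trivial trivial (by linarith) ht0.le (by ring)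
    have hres : y - Φ (xs - t • (xs - x)) = (y - Φ xs) + t • Φ (xs - x) := by
      simp only [map_sub, map_smul]
      abel
    have h := hmin (xs - t • (xs - x))
    simp only [obj, hres, norm_add_sq_real, norm_smul, real_inner_smul_right, Real.norm_eq_abs,
      mul_pow, sq_abs] at h
    have ht : t * (lam * (A (L.adjoint xs) - A (L.adjoint x))) ≤
        t * (⟪y - Φ xs, Φ (xs - x)⟫ + t * (‖Φ (xs - x)‖ ^ 2 / 2)) := by
      nlinarith [mul_le_mul_of_nonneg_left hconv hlam]
    exact le_of_mul_le_mul_left ht ht0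
  have hlim : Tendsto (fun t : ℝ => ⟪y - Φ xs, Φ (xs - x)⟫ + t * (‖Φ (xs - x)‖ ^ 2 / 2))
      (𝓝[>] 0) (𝓝 ⟪y - Φ xs, Φ (xs - x)⟫) := by
    have hcont : Continuous fun t : ℝ => ⟪y - Φ xs, Φ (xs - x)⟫ + t * (‖Φ (xs - x)‖ ^ 2 / 2) := by
      fun_prop
    simpa using hcont.tendsto' 0 _ (by simp) |>.mono_left nhdsWithin_le_nhds
  exact ge_of_tendsto hlim (eventually_of_mem (Ioo_mem_nhdsGT one_pos) hstep)

lemma norm_map_sub_le_and_mul_breg_le_of_minimizer (hA : IsNorm A) {x₀ xs : Euc N} {w : Euc M}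
    {lam ε : ℝ} (hlam : 0 ≤ lam)
    (hmin : ∀ x, obj Φ L A (Φ x₀ + w) lam xs ≤ obj Φ L A (Φ x₀ + w) lam x) (hw : ‖w‖ ≤ ε)
    {η : Euc M} {α : Euc P} (hα : α ∈ subdiff A (L.adjoint x₀)) (hΦη : Φ.adjoint η = L α) :
    ‖Φ (xs - x₀)‖ ≤ ε + lam * ‖η‖ ∧
      lam * breg A α (L.adjoint xs) (L.adjoint x₀) ≤ (ε + lam * ‖η‖) ^ 2 / 4 := by
  have hopt := mul_sub_le_inner_of_minimizer hA hlam hmin x₀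
  have hres : Φ x₀ + w - Φ xs = w - Φ (xs - x₀) := by
    rw [map_sub]
    abel
  have hsrc : ⟪α, L.adjoint xs - L.adjoint x₀⟫ = ⟪η, Φ (xs - x₀)⟫ := by
    rw [← map_sub, ContinuousLinearMap.adjoint_inner_right, ← hΦη,
      ContinuousLinearMap.adjoint_inner_left]
  have hnoise : ⟪w, Φ (xs - x₀)⟫ ≤ ε * ‖Φ (xs - x₀)‖ :=
    (real_inner_le_norm _ _).trans (by gcongr)
  have hη : -⟪η, Φ (xs - x₀)⟫ ≤ ‖η‖ * ‖Φ (xs - x₀)‖ :=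
    (neg_le_abs _).trans (abs_real_inner_le_norm _ _)
  refine le_and_le_sq_div_four_of_le_mul_sub_sq
    (mul_nonneg hlam (breg_nonneg hα _)) (by positivity [(norm_nonneg w).trans hw]) ?_
  rw [hres, inner_sub_left, real_inner_self_eq_norm_sq] at hopt
  simp only [breg, hsrc]
  nlinarith [mul_le_mul_of_nonneg_left hη hlam]

end Minimizers

theorem stmt6 {N M P : ℕ} (Φ : Euc N →L[ℝ] Euc M) (L : Euc P →L[ℝ] Euc N)
    (A : Euc P → ℝ) (hA : IsNorm A) (x₀ : Euc N)
    (T₀ : Submodule ℝ (Euc P)) (e₀ : Euc P)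
    (hdec : Decomposable A (ContinuousLinearMap.adjoint L x₀) T₀ e₀)
    (CΦ CL CA : ℝ) (hCΦ : 0 < CΦ) (hCL : 0 < CL) (hCA : 0 < CA)
    (hCΦbd : ∀ x : Euc N, proj T₀ᗮ (ContinuousLinearMap.adjoint L x) = 0 → CΦ * ‖x‖ ≤ ‖Φ x‖)
    (hCLbd : ∀ x ∈ (LinearMap.ker (((proj T₀ᗮ).comp (ContinuousLinearMap.adjoint L)) : Euc N →ₗ[ℝ] Euc P))ᗮ,
        CL * ‖x‖ ≤ ‖proj T₀ᗮ (ContinuousLinearMap.adjoint L x)‖)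
    (hCAbd : ∀ z : Euc P, CA * ‖z‖ ≤ A z)
    (ε c : ℝ) (hε : 0 < ε) (hc : 0 < c) (w : Euc M) (hw : ‖w‖ ≤ ε)
    (η : Euc M) (α : Euc P) (hSC : SC Φ L A x₀ η α)
    (hsat : dualNorm A (proj T₀ᗮ α) < 1)
    (xs : Euc N)
    (hmin : ∀ x, obj Φ L A (Φ x₀ + w) (c * ε) xs ≤ obj Φ L A (Φ x₀ + w) (c * ε) x) :
    ‖xs - x₀‖ ≤
      ((2 + c * ‖η‖) / CΦ +
        ((‖Φ‖ + CΦ) / (CL * CΦ * CA)) * (1 + c * ‖η‖ / 2) ^ 2 /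
          (c * (1 - dualNorm A (proj T₀ᗮ α)))) * ε := by
  obtain ⟨hα, hΦη, -⟩ := hSC
  set ρ := dualNorm A (proj T₀ᗮ α)
  have hρ : 0 < 1 - ρ := sub_pos.mpr hsat
  obtain ⟨hpred, hbreg⟩ :=
    norm_map_sub_le_and_mul_breg_le_of_minimizer hA (mul_pos hc hε).le hmin hw hα hΦη
  have hcone := hdec.one_sub_dualNorm_mul_le_breg hA hCA hCAbd hα (L.adjoint xs)
  rw [← map_sub] at hcone
  have hsplit := mul_norm_le_of_bounded_below_on_ker Φ
    ((proj T₀ᗮ).comp L.adjoint : Euc N →ₗ[ℝ] Euc P) hCΦ.le hCL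
    (fun x hx => hCΦbd x (LinearMap.mem_ker.mp hx)) hCLbd (xs - x₀)
  have hz : ‖proj T₀ᗮ (L.adjoint (xs - x₀))‖ ≤
      ε * (1 + c * ‖η‖ / 2) ^ 2 / (c * (1 - ρ) * CA) := by
    rw [le_div_iff₀ (by positivity)]
    refine le_of_mul_le_mul_left ?_ hε
    calc ε * (‖proj T₀ᗮ (L.adjoint (xs - x₀))‖ * (c * (1 - ρ) * CA))
        = c * ε * ((1 - ρ) * (CA * ‖proj T₀ᗮ (L.adjoint (xs - x₀))‖)) := by ring
      _ ≤ c * ε * ((1 - ρ) * A (proj T₀ᗮ (L.adjoint (xs - x₀)))) := by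
        gcongr
        exact hCAbd _
      _ ≤ c * ε * breg A α (L.adjoint xs) (L.adjoint x₀) := by gcongr
      _ ≤ (ε + c * ε * ‖η‖) ^ 2 / 4 := hbreg
      _ ≤ ε * (ε * (1 + c * ‖η‖ / 2) ^ 2) := by
        nlinarith [mul_nonneg (sq_nonneg ε) (mul_nonneg hc.le (norm_nonneg η)), sq_nonneg ε]
  have hbound : CΦ * ‖xs - x₀‖ ≤ (2 + c * ‖η‖) * ε +
      (‖Φ‖ + CΦ) * (ε * (1 + c * ‖η‖ / 2) ^ 2 / (c * (1 - ρ) * CA) / CL) := by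
    exact hsplit.trans (add_le_add (by linarith) (by gcongr; exact hz))
  rw [← le_div_iff₀' hCΦ] at hbound
  refine hbound.trans_eq ?_
  field_simp
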